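/- Counterfactual abstraction as a downward abstraction: a counterfactual abstraction M_L → M_H between functional causal models is equivalent to a downward abstraction (π, τ) : (L3*(V*_L), M_L) → (L3*(V*_H), M_H) between the models of counterfactual queries with query map π(CTF_{Y_1|W_1,…,Y_m|W_m}) := CTF_{π(Y_1)|π(W_1),…,π(Y_m)|π(W_m)}; in particular, naturality of τ for this query map is exactly the counterfactual consistency condition, and conversely any such downward abstraction makes (π, τ) a variable alignment. -/

import Mathlib

/-!
A counterfactual abstraction and a downward abstraction with the query map
`CTF_{Y_1|W_1,…} ↦ CTF_{π(Y_1)|π(W_1),…}` carry the same data `(π, τ)` and the same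
epi/determinism conditions, and naturality of `τ` at `CTF_{Y_1|W_1,…}` is literally the
consistency equation. The only extra content is in the converse: the image of the valid query
`CTF_{X,Y|X,Y}` must itself be valid, which forces `π(X)` and `π(Y)` to be duplicate-free and
disjoint, i.e. `(π, τ)` to be a variable alignment.
-/

open CategoryTheory MonoidalCategory

universe v u w w'

/-- A Markov category: a symmetric monoidal category whose unit is terminal and in which
every object carries a commutative comonoid "copy" structure compatible with `⊗`. -/
class MarkovCategory (C : Type u) [Category.{v} C] [MonoidalCategory C]
    [SymmetricCategory C] where
  copy : ∀ X : C, X ⟶ X ⊗ X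
  del : ∀ X : C, X ⟶ 𝟙_ C
  del_unique : ∀ {X : C} (f g : X ⟶ 𝟙_ C), f = g
  copy_comm : ∀ X : C, copy X ≫ (β_ X X).hom = copy X
  copy_assoc : ∀ X : C, copy X ≫ (copy X ▷ X) ≫ (α_ X X X).hom = copy X ≫ (X ◁ copy X)
  copy_counit : ∀ X : C, copy X ≫ (del X ▷ X) ≫ (λ_ X).hom = 𝟙 X
  copy_tensor : ∀ X Y : C,
    copy (X ⊗ Y) = (copy X ⊗ₘ copy Y) ≫ (α_ X X (Y ⊗ Y)).hom ≫ (X ◁ (α_ X Y Y).inv) ≫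
      (X ◁ ((β_ X Y).hom ▷ Y)) ≫ (X ◁ (α_ Y X Y).hom) ≫ (α_ X Y (X ⊗ Y)).inv
  copy_unit : copy (𝟙_ C) = (λ_ (𝟙_ C)).inv

namespace CausalAbs

variable {C : Type u} [Category.{v} C] [MonoidalCategory C] [SymmetricCategory C]
  [_root_.MarkovCategory C]

/-- A morphism of a Markov category is deterministic when it commutes with copying. -/
def Deterministic {X Y : C} (f : X ⟶ Y) : Prop :=
  f ≫ _root_.MarkovCategory.copy Y = _root_.MarkovCategory.copy X ≫ (f ⊗ₘ f)

/-- Composites of deterministic morphisms are deterministic. -/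
theorem Deterministic.comp {X Y Z : C} {f : X ⟶ Y} {g : Y ⟶ Z}
    (hf : Deterministic f) (hg : Deterministic g) : Deterministic (f ≫ g) := by
  unfold Deterministic at *
  rw [Category.assoc, hg, ← Category.assoc, hf, Category.assoc, MonoidalCategory.tensorHom_comp_tensorHom]

/-- The tensor product of a list of objects, read off along an object assignment. -/
def tList {α : Type*} (f : α → C) : List α → C
  | [] => 𝟙_ C
  | x :: l => f x ⊗ tList f l

/-- Coherence isomorphism between the tensor of an appended list and the tensor of the
tensors of the two parts. -/
def splitIso {α : Type*} (f : α → C) : (a b : List α) → (tList f (a ++ b) ≅ tList f a ⊗ tList f b)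
  | [], b => (λ_ (tList f b)).symm
  | x :: a, b => whiskerLeftIso (f x) (splitIso f a b) ≪≫ (α_ (f x) (tList f a) (tList f b)).symm

/-- Flattened elementwise application of a list-valued map. -/
def flatM {α β : Type*} (f : α → List β) : List α → List β
  | [] => []
  | x :: l => f x ++ flatM f l

theorem flatM_append {α β : Type*} (f : α → List β) (a b : List α) :
    flatM f (a ++ b) = flatM f a ++ flatM f b := by
  induction a with
  | nil => rfl
  | cons x a ih => simp [flatM, ih, List.append_assoc]

/-- The extension of the family `τ` of channels of a type alignment to lists of (high-level)
types, via monoidal products. -/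
def tauList {α β : Type*} (obL : β → C) (obH : α → C) (π : α → List β)
    (τ : ∀ X : α, tList obL (π X) ⟶ obH X) :
    (l : List α) → (tList obL (flatM π l) ⟶ tList obH l)
  | [] => 𝟙 _
  | X :: l => (splitIso obL (π X) (flatM π l)).hom ≫ (τ X ⊗ₘ tauList obL obH π τ l)

/-- A query signature: a collection of types and of queries, each with a list of input types
and a list of output types. -/
structure QuerySig : Type (w + 1) where
  Ty : Type
  Qu : Type w
  dom : Qu → List Ty
  cod : Qu → List Ty

/-- A model of a query signature in `C`: semantics for types and for queries. (It stands for
the induced strong symmetric monoidal copy/discard-preserving functor from the free Markov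
category on the signature to `C`, which is determined by this data.) -/
structure QueryModel (C : Type u) [Category.{v} C] [MonoidalCategory C] [SymmetricCategory C]
    [_root_.MarkovCategory C] (σ : QuerySig) where
  obj : σ.Ty → C
  interp : ∀ q : σ.Qu, tList obj (σ.dom q) ⟶ tList obj (σ.cod q)

variable {σL σM σH : QuerySig}

/-- The data of a downward abstraction: a map on types, a family of channels, and
a map sending high-level queries to low-level queries. -/
structure PreDown (ML : QueryModel C σL) (MH : QueryModel C σH) where
  πTy : σH.Ty → List σL.Ty
  τ : ∀ X : σH.Ty, tList ML.obj (πTy X) ⟶ MH.obj X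
  πQ : σH.Qu → σL.Qu

/-- The data of an upward abstraction: a type alignment together with a partial map sending
low-level queries to high-level queries. -/
structure PreUp (ML : QueryModel C σL) (MH : QueryModel C σH) where
  πTy : σH.Ty → List σL.Ty
  τ : ∀ X : σH.Ty, tList ML.obj (πTy X) ⟶ MH.obj X
  ω : σL.Qu → Option σH.Qu

/-- `d` is a downward abstraction: its components (and their monoidal products) are epic
deterministic channels, the query map respects input/output types, and `τ` is natural at
every query, i.e. the consistency equations hold. -/
def PreDown.IsAbstraction {ML : QueryModel C σL} {MH : QueryModel C σH}
    (d : PreDown ML MH) : Prop :=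
  (∀ X, Deterministic (d.τ X)) ∧
  (∀ X, Epi (d.τ X)) ∧
  (∀ l : List σH.Ty, Deterministic (tauList ML.obj MH.obj d.πTy d.τ l)) ∧
  (∀ l : List σH.Ty, Epi (tauList ML.obj MH.obj d.πTy d.τ l)) ∧
  (∀ q : σH.Qu, ∃ (hdom : σL.dom (d.πQ q) = flatM d.πTy (σH.dom q))
      (hcod : σL.cod (d.πQ q) = flatM d.πTy (σH.cod q)),
    tauList ML.obj MH.obj d.πTy d.τ (σH.dom q) ≫ MH.interp q
      = eqToHom (congrArg (tList ML.obj) hdom.symm) ≫ ML.interp (d.πQ q) ≫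
          eqToHom (congrArg (tList ML.obj) hcod) ≫ tauList ML.obj MH.obj d.πTy d.τ (σH.cod q))

/-- `u` is an upward abstraction: a type alignment whose components (and their monoidal
products) are epic deterministic channels, together with a partial surjective query map `ω`
satisfying, whenever defined, the consistency equations. -/
def PreUp.IsAbstraction {ML : QueryModel C σL} {MH : QueryModel C σH}
    (u : PreUp ML MH) : Prop :=
  (∀ X, Deterministic (u.τ X)) ∧
  (∀ X, Epi (u.τ X)) ∧
  (∀ l : List σH.Ty, Deterministic (tauList ML.obj MH.obj u.πTy u.τ l)) ∧
  (∀ l : List σH.Ty, Epi (tauList ML.obj MH.obj u.πTy u.τ l)) ∧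
  (∀ qH : σH.Qu, ∃ qL, u.ω qL = some qH) ∧
  (∀ qL qH, u.ω qL = some qH →
    ∃ (hdom : σL.dom qL = flatM u.πTy (σH.dom qH))
      (hcod : σL.cod qL = flatM u.πTy (σH.cod qH)),
    tauList ML.obj MH.obj u.πTy u.τ (σH.dom qH) ≫ MH.interp qH
      = eqToHom (congrArg (tList ML.obj) hdom.symm) ≫ ML.interp qL ≫
          eqToHom (congrArg (tList ML.obj) hcod) ≫ tauList ML.obj MH.obj u.πTy u.τ (σH.cod qH))


section FCM

variable (C) in
/-- A functional causal model (FCM) over endogenous variables `Var`, presented through the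
semantics it assigns to counterfactual queries: an object `⟦X⟧` for each endogenous variable
and, for each list of pairs of subsets `(W_j, Y_j)` of endogenous variables, the channel
`⟦CTF_{Y_1|W_1,…,Y_m|W_m}⟧ : ⟦W_1⟧⊗…⊗⟦W_m⟧ ⟶ ⟦Y_1⟧⊗…⊗⟦Y_m⟧` obtained by copying the joint
exogenous state `Λ` `m` times and feeding the `j`-th copy into the deterministic part `F`
opened at `W_j` (mechanisms of `W_j` deleted), outputting `Y_j`. -/
structure AbsFCM (Var : Type) where
  obj : Var → C
  ctf : (l : List (List Var × List Var)) →
    (tList obj (flatM Prod.fst l) ⟶ tList obj (flatM Prod.snd l))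

variable {Var : Type}

/-- The query signature `L3*(V*)` of counterfactual queries of an FCM: its types are the
endogenous variables, and for each choice of subsets `W_j, Y_j ⊆ V*` (`j = 1,…,m`) there is
a query `CTF_{Y_1|W_1,…,Y_m|W_m}` with inputs `(W_j)_j` and outputs `(Y_j)_j`. -/
def L3Sig (M : AbsFCM C Var) : QuerySig where
  Ty := Var
  Qu := {l : List (List Var × List Var) // ∀ p ∈ l, p.1.Nodup ∧ p.2.Nodup}
  dom q := flatM Prod.fst q.1
  cod q := flatM Prod.snd q.1

/-- The model of counterfactual queries determined by an FCM. -/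
def L3Model (M : AbsFCM C Var) : QueryModel C (L3Sig M) where
  obj := M.obj
  interp q := M.ctf q.1

theorem flatM_fst_map {β γ : Type*} (π : β → List γ) (l : List (List β × List β)) :
    flatM Prod.fst (l.map fun p => (flatM π p.1, flatM π p.2)) = flatM π (flatM Prod.fst l) := by
  induction l with
  | nil => rfl
  | cons p l ih => simp [flatM, flatM_append, ih]

theorem flatM_snd_map {β γ : Type*} (π : β → List γ) (l : List (List β × List β)) :
    flatM Prod.snd (l.map fun p => (flatM π p.1, flatM π p.2)) = flatM π (flatM Prod.snd l) := by
  induction l with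
  | nil => rfl
  | cons p l ih => simp [flatM, flatM_append, ih]

variable {VarL VarH : Type}

/-- A counterfactual abstraction `M_L → M_H` between FCMs: a variable alignment between the
endogenous variables (pairwise disjoint duplicate-free subsets `π(X) ⊆ V*_L` together with
deterministic epic channels `τ_X : ⟦π(X)⟧ → ⟦X⟧` whose monoidal products are also epic and
deterministic) such that for all counterfactual queries the consistency equation
`⟦CTF_{Y_1|W_1,…,Y_m|W_m}⟧_{M_H} ∘ (τ_{W_1}⊗…⊗τ_{W_m}) =
 (τ_{Y_1}⊗…⊗τ_{Y_m}) ∘ ⟦CTF_{π(Y_1)|π(W_1),…,π(Y_m)|π(W_m)}⟧_{M_L}` holds. -/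
structure CFAbstraction (ML : AbsFCM C VarL) (MH : AbsFCM C VarH) where
  π : VarH → List VarL
  π_nodup : ∀ X, (π X).Nodup
  π_disj : ∀ X Y, X ≠ Y → ∀ v ∈ π X, v ∉ π Y
  τ : ∀ X : VarH, tList ML.obj (π X) ⟶ MH.obj X
  τ_det : ∀ X, Deterministic (τ X)
  τ_epi : ∀ X, Epi (τ X)
  tau_det : ∀ l : List VarH, Deterministic (tauList ML.obj MH.obj π τ l)
  tau_epi : ∀ l : List VarH, Epi (tauList ML.obj MH.obj π τ l)
  consis : ∀ (l : List (List VarH × List VarH)), (∀ p ∈ l, p.1.Nodup ∧ p.2.Nodup) →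
    tauList ML.obj MH.obj π τ (flatM Prod.fst l) ≫ MH.ctf l
      = eqToHom (congrArg (tList ML.obj) (flatM_fst_map π l).symm) ≫
          ML.ctf (l.map fun p => (flatM π p.1, flatM π p.2)) ≫
          eqToHom (congrArg (tList ML.obj) (flatM_snd_map π l)) ≫
          tauList ML.obj MH.obj π τ (flatM Prod.snd l)

end FCM

theorem flatM_eq_flatMap {α β : Type*} (f : α → List β) (l : List α) :
    flatM f l = l.flatMap f := by
  induction l with
  | nil => rfl
  | cons x l ih => simp [flatM, ih]

theorem nodup_flatM_iff {α β : Type*} {f : α → List β} {l : List α} :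
    (flatM f l).Nodup ↔
      (∀ x ∈ l, (f x).Nodup) ∧ l.Pairwise (Function.onFun List.Disjoint f) := by
  rw [flatM_eq_flatMap, List.nodup_flatMap]

theorem nodup_flatM {α β : Type*} {f : α → List β} (hnd : ∀ x, (f x).Nodup)
    (hdisj : ∀ x y, x ≠ y → ∀ v ∈ f x, v ∉ f y) {l : List α} (hl : l.Nodup) :
    (flatM f l).Nodup :=
  nodup_flatM_iff.2 ⟨fun x _ => hnd x, hl.imp fun hxy v hv => hdisj _ _ hxy v hv⟩

theorem AbsFCM.eqToHom_ctf_eqToHom_comp_congr {D : Type*} [Category D] [MonoidalCategory D]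
    {Var : Type} (M : AbsFCM D Var) {a b : List (List Var × List Var)} (h : a = b) {X Y Z : D}
    (ea : X = tList M.obj (flatM Prod.fst a)) (ea' : tList M.obj (flatM Prod.snd a) = Y)
    (eb : X = tList M.obj (flatM Prod.fst b)) (eb' : tList M.obj (flatM Prod.snd b) = Y)
    (f : Y ⟶ Z) :
    eqToHom ea ≫ M.ctf a ≫ eqToHom ea' ≫ f = eqToHom eb ≫ M.ctf b ≫ eqToHom eb' ≫ f := by
  subst h
  rfl

section Abstraction

variable {VarL VarH : Type} {ML : AbsFCM C VarL} {MH : AbsFCM C VarH}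

def CFAbstraction.toPreDown (ca : CFAbstraction ML MH) : PreDown (L3Model ML) (L3Model MH) where
  πTy := ca.π
  τ := ca.τ
  πQ q := ⟨q.1.map fun p => (flatM ca.π p.1, flatM ca.π p.2), by
    simp only [List.mem_map]
    rintro _ ⟨p, hp, rfl⟩
    exact ⟨nodup_flatM ca.π_nodup ca.π_disj (q.2 p hp).1,
      nodup_flatM ca.π_nodup ca.π_disj (q.2 p hp).2⟩⟩

theorem CFAbstraction.toPreDown_isAbstraction (ca : CFAbstraction ML MH) :
    ca.toPreDown.IsAbstraction :=
  ⟨ca.τ_det, ca.τ_epi, ca.tau_det, ca.tau_epi, fun q =>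
    ⟨flatM_fst_map ca.π q.1, flatM_snd_map ca.π q.1, ca.consis q.1 q.2⟩⟩

/-- `π(CTF_{Y_1|W_1,…}) = CTF_{π(Y_1)|π(W_1),…}`. -/
def PreDown.IsCtfQueryMap (d : PreDown (L3Model ML) (L3Model MH)) : Prop :=
  ∀ q : (L3Sig MH).Qu, (d.πQ q).1 = q.1.map fun p => (flatM d.πTy p.1, flatM d.πTy p.2)

/-- The image of the valid query `CTF_{l|l}` is valid. -/
theorem PreDown.nodup_flatM_πTy {d : PreDown (L3Model ML) (L3Model MH)}
    (hmap : d.IsCtfQueryMap) {l : List VarH} (hl : l.Nodup) : (flatM d.πTy l).Nodup := by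
  let q : (L3Sig MH).Qu := ⟨[(l, l)], by simpa using hl⟩
  have hvalid := (d.πQ q).2
  rw [hmap q] at hvalid
  exact (hvalid _ List.mem_cons_self).1

theorem PreDown.nodup_πTy {d : PreDown (L3Model ML) (L3Model MH)}
    (hmap : d.IsCtfQueryMap) (X : VarH) : (d.πTy X).Nodup := by
  simpa [flatM] using PreDown.nodup_flatM_πTy hmap (List.nodup_singleton X)

theorem PreDown.πTy_disjoint {d : PreDown (L3Model ML) (L3Model MH)}
    (hmap : d.IsCtfQueryMap) (X Y : VarH) (hXY : X ≠ Y) : ∀ v ∈ d.πTy X, v ∉ d.πTy Y := by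
  have hnd := PreDown.nodup_flatM_πTy hmap (l := [X, Y]) (by simpa using hXY)
  exact fun v hvX hvY => List.pairwise_pair.1 (nodup_flatM_iff.1 hnd).2 hvX hvY

theorem PreDown.consis_of_isAbstraction {d : PreDown (L3Model ML) (L3Model MH)}
    (habs : d.IsAbstraction) (hmap : d.IsCtfQueryMap) (l : List (List VarH × List VarH))
    (hl : ∀ p ∈ l, p.1.Nodup ∧ p.2.Nodup) :
    tauList ML.obj MH.obj d.πTy d.τ (flatM Prod.fst l) ≫ MH.ctf l
      = eqToHom (congrArg (tList ML.obj) (flatM_fst_map d.πTy l).symm) ≫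
          ML.ctf (l.map fun p => (flatM d.πTy p.1, flatM d.πTy p.2)) ≫
          eqToHom (congrArg (tList ML.obj) (flatM_snd_map d.πTy l)) ≫
          tauList ML.obj MH.obj d.πTy d.τ (flatM Prod.snd l) := by
  obtain ⟨-, -, -, -, hnat⟩ := habs
  obtain ⟨_, _, hnat_q⟩ := hnat ⟨l, hl⟩
  exact hnat_q.trans (ML.eqToHom_ctf_eqToHom_comp_congr (hmap ⟨l, hl⟩) _ _ _ _ _)

def PreDown.toCFAbstraction {d : PreDown (L3Model ML) (L3Model MH)} (habs : d.IsAbstraction)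
    (hmap : d.IsCtfQueryMap) : CFAbstraction ML MH where
  π := d.πTy
  π_nodup := PreDown.nodup_πTy hmap
  π_disj := PreDown.πTy_disjoint hmap
  τ := d.τ
  τ_det := habs.1
  τ_epi := habs.2.1
  tau_det := habs.2.2.1
  tau_epi := habs.2.2.2.1
  consis := PreDown.consis_of_isAbstraction habs hmap

end Abstraction

/-- Counterfactual abstraction as a downward abstraction: a counterfactual abstraction
`M_L → M_H` between functional causal models is equivalent to a downward abstraction
`(π, τ) : (L3*(V*_L), M_L) → (L3*(V*_H), M_H)` between the models of counterfactual queries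
with query map `π(CTF_{Y_1|W_1,…,Y_m|W_m}) := CTF_{π(Y_1)|π(W_1),…,π(Y_m)|π(W_m)}`; in
particular, naturality of `τ` for this query map is exactly the counterfactual consistency
condition, and conversely any such downward abstraction makes `(π, τ)` a variable
alignment (the `π(X)` are pairwise disjoint subsets). -/
theorem counterfactualAbstraction_equiv_downward_abstraction
    {C : Type u} [Category.{v} C] [MonoidalCategory C] [SymmetricCategory C]
    [_root_.MarkovCategory C] {VarL VarH : Type}
    (ML : AbsFCM C VarL) (MH : AbsFCM C VarH) :
    (∀ ca : CFAbstraction ML MH,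
      ∃ d : PreDown (L3Model ML) (L3Model MH), d.IsAbstraction ∧
        (∃ hπ : d.πTy = ca.π, ∀ X, d.τ X = eqToHom (by rw [hπ]; rfl) ≫ ca.τ X) ∧
        (∀ q : (L3Sig MH).Qu,
          (d.πQ q).1 = q.1.map fun p => (flatM d.πTy p.1, flatM d.πTy p.2))) ∧
    (∀ d : PreDown (L3Model ML) (L3Model MH), d.IsAbstraction →
      (∀ q : (L3Sig MH).Qu,
        (d.πQ q).1 = q.1.map fun p => (flatM d.πTy p.1, flatM d.πTy p.2)) →
      ((∀ X Y, X ≠ Y → ∀ v ∈ d.πTy X, v ∉ d.πTy Y) ∧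
        ∃ ca : CFAbstraction ML MH,
          ∃ hπ : ca.π = d.πTy, ∀ X, ca.τ X = eqToHom (by rw [hπ]; rfl) ≫ d.τ X)) := by
  refine ⟨fun ca => ⟨ca.toPreDown, ca.toPreDown_isAbstraction,
      ⟨rfl, fun _ => (Category.id_comp _).symm⟩, fun _ => rfl⟩,
    fun d habs hmap => ⟨PreDown.πTy_disjoint hmap, d.toCFAbstraction habs hmap,
      rfl, fun _ => (Category.id_comp _).symm⟩⟩

end CausalAbs
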